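/- arXiv:1310.3146 — 6 statements merged into one kernel-verified Lean document; each statement's English description precedes it below -/
import Mathlib

section
/- Let J = ‖·‖₁ on ℝⁿ and u, v ∈ ℝⁿ. If D_J^p(v,u) = 0 for all p ∈ ∂J(u), then for every index i, vᵢ does not have the opposite sign of uᵢ (i.e. sign₀(uᵢ)·vᵢ ≥ 0), and in particular the support of v is contained in the support of u. -/
open Finset

lemma sign_mul_self_eq_abs (x : ℝ) : Real.sign x * x = |x| := by
  rcases lt_trichotomy x 0 with hx | hx | hx
  · rw [Real.sign_of_neg hx, abs_of_neg hx]; ring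
  · simp [hx]
  · rw [Real.sign_of_pos hx, abs_of_pos hx]; ring

lemma sign_mul_le_abs (x y : ℝ) : Real.sign x * y ≤ |y| := by
  calc Real.sign x * y ≤ |Real.sign x * y| := le_abs_self _
    _ = |Real.sign x| * |y| := abs_mul _ _
    _ ≤ 1 * |y| := by
        apply mul_le_mul_of_nonneg_right _ (abs_nonneg y)
        rcases lt_trichotomy x 0 with hx | hx | hx
        · rw [Real.sign_of_neg hx]; norm_num
        · simp [hx]
        · rw [Real.sign_of_pos hx]; norm_num
    _ = |y| := one_mul _

/-- For `J = ‖·‖₁` on `ℝⁿ`: if the Bregman distance `D_J^p(v,u)` vanishes for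
every `p ∈ ∂J(u)`, then `sign₀(uᵢ)·vᵢ ≥ 0` for every `i`, and in particular
the support of `v` is contained in the support of `u`. -/
theorem l1_bregman_zero_implies_no_opposite_signs
    {n : ℕ} (u v : Fin n → ℝ)
    (h : ∀ p : Fin n → ℝ,
      (∀ w : Fin n → ℝ, (∑ i, |u i|) + ∑ i, p i * (w i - u i) ≤ ∑ i, |w i|) →
      (∑ i, |v i|) - (∑ i, |u i|) - (∑ i, p i * (v i - u i)) = 0) :
    ∀ i, 0 ≤ Real.sign (u i) * v i ∧ (v i ≠ 0 → u i ≠ 0) := by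
  have hsub : ∀ w : Fin n → ℝ,
      (∑ i, |u i|) + ∑ i, Real.sign (u i) * (w i - u i) ≤ ∑ i, |w i| := by
    intro w
    have : (∑ i, |u i|) + ∑ i, Real.sign (u i) * (w i - u i)
        = ∑ i, Real.sign (u i) * w i := by
      rw [← Finset.sum_add_distrib]
      apply Finset.sum_congr rfl
      intro i _
      rw [← sign_mul_self_eq_abs (u i)]; ring
    rw [this]
    exact Finset.sum_le_sum fun i _ => sign_mul_le_abs _ _
  have hzero := h (fun i => Real.sign (u i)) hsub
  have hsum : ∑ i, (|v i| - Real.sign (u i) * v i) = 0 := by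
    have : ∑ i, (|v i| - Real.sign (u i) * v i)
        = (∑ i, |v i|) - (∑ i, |u i|)
          - (∑ i, Real.sign (u i) * (v i - u i)) := by
      rw [Finset.sum_sub_distrib]
      have h1 : ∑ i, Real.sign (u i) * (v i - u i)
          = (∑ i, Real.sign (u i) * v i) - ∑ i, |u i| := by
        rw [← Finset.sum_sub_distrib]
        apply Finset.sum_congr rfl
        intro i _
        rw [← sign_mul_self_eq_abs (u i)]; ring
      rw [h1]; ring
    rw [this]; exact hzero
  have hnn : ∀ i ∈ Finset.univ, (0:ℝ) ≤ |v i| - Real.sign (u i) * v i :=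
    fun i _ => sub_nonneg.mpr (sign_mul_le_abs _ _)
  have heach := (Finset.sum_eq_zero_iff_of_nonneg hnn).mp hsum
  intro i
  have hi : |v i| = Real.sign (u i) * v i := by
    have := heach i (Finset.mem_univ i)
    linarith
  constructor
  · rw [← hi]; exact abs_nonneg _
  · intro hv hu
    rw [hu] at hi
    simp at hi
    exact hv hi
end

section
/- Let J = ‖·‖₁ on ℝⁿ and u, v ∈ ℝⁿ. Then sign₀(u) = sign₀(v) componentwise if and only if D_J^p(v,u) = 0 for all p ∈ ∂J(u) and D_J^q(u,v) = 0 for all q ∈ ∂J(v). -/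
open Finset

/-- From the global subgradient inequality, extract the per-coordinate one. -/
lemma l1_coord_of_sub {n : ℕ} (u p : Fin n → ℝ)
    (h : ∀ w : Fin n → ℝ, (∑ i, |u i|) + ∑ i, p i * (w i - u i) ≤ ∑ i, |w i|)
    (i : Fin n) (t : ℝ) :
    |u i| + p i * (t - u i) ≤ |t| := by
  have H := h (Function.update u i t)
  have h1 : (∑ j, |Function.update u i t j|)
      = |t| + ∑ j ∈ Finset.univ.erase i, |u j| := by
    rw [show (fun j => |Function.update u i t j|)
        = Function.update (fun j => |u j|) i |t| from
        funext fun j => Function.apply_update (fun _ x => |x|) u i t j]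
    rw [Finset.sum_update_of_mem (Finset.mem_univ i)]
    simp [Finset.sum_erase_eq_sub]
  have h2 : (∑ j, p j * (Function.update u i t j - u j)) = p i * (t - u i) := by
    rw [show (fun j => p j * (Function.update u i t j - u j))
        = Function.update (fun j => p j * (u j - u j)) i (p i * (t - u i)) from
        funext fun j => Function.apply_update (fun k x => p k * (x - u k)) u i t j]
    rw [Finset.sum_update_of_mem (Finset.mem_univ i)]
    simp
  rw [h1, h2] at H
  have h3 : (∑ j, |u j|) = |u i| + ∑ j ∈ Finset.univ.erase i, |u j| := by
    rw [← Finset.add_sum_erase _ _ (Finset.mem_univ i)]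
  rw [h3] at H
  linarith

/-- Per-coordinate consequences of the subgradient inequality for `|·|`. -/
lemma abs_subgrad_facts (a p : ℝ)
    (h : ∀ t : ℝ, |a| + p * (t - a) ≤ |t|) :
    |p| ≤ 1 ∧ p * a = |a| := by
  have h1 := h (a + 1)
  have h2 := h (a - 1)
  have h0 := h 0
  have ha1 : |a + 1| ≤ |a| + 1 := by
    calc |a + 1| ≤ |a| + |(1:ℝ)| := abs_add_le a 1
    _ = |a| + 1 := by norm_num
  have ha2 : |a - 1| ≤ |a| + 1 := by
    calc |a - 1| ≤ |a| + |(1:ℝ)| := abs_sub a 1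
    _ = |a| + 1 := by norm_num
  have hp1 : p ≤ 1 := by nlinarith
  have hp2 : -1 ≤ p := by nlinarith
  have hpabs : |p| ≤ 1 := abs_le.mpr ⟨hp2, hp1⟩
  refine ⟨hpabs, ?_⟩
  have hle : p * a ≤ |a| := by
    calc p * a ≤ |p * a| := le_abs_self _
    _ = |p| * |a| := abs_mul p a
    _ ≤ 1 * |a| := by
        exact mul_le_mul_of_nonneg_right hpabs (abs_nonneg a)
    _ = |a| := one_mul _
  have hge : |a| ≤ p * a := by
    have := h 0
    simp at this
    nlinarith
  linarith

/-- Building a subgradient from per-coordinate data. -/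
lemma l1_sub_of_coord {n : ℕ} (u p : Fin n → ℝ)
    (h : ∀ i, |p i| ≤ 1 ∧ p i * u i = |u i|) :
    ∀ w : Fin n → ℝ, (∑ i, |u i|) + ∑ i, p i * (w i - u i) ≤ ∑ i, |w i| := by
  intro w
  rw [← Finset.sum_add_distrib]
  apply Finset.sum_le_sum
  intro i _
  obtain ⟨h1, h2⟩ := h i
  have : |u i| + p i * (w i - u i) = p i * w i := by ring_nf; nlinarith [h2]
  rw [this]
  calc p i * w i ≤ |p i * w i| := le_abs_self _
  _ = |p i| * |w i| := abs_mul _ _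
  _ ≤ 1 * |w i| := mul_le_mul_of_nonneg_right h1 (abs_nonneg _)
  _ = |w i| := one_mul _

/-- The Bregman distance rewrites as a sum of nonnegative per-coordinate
terms; if it vanishes, each term vanishes. -/
lemma l1_bregman_terms {n : ℕ} (u v p : Fin n → ℝ)
    (h : ∀ i, |p i| ≤ 1 ∧ p i * u i = |u i|)
    (hz : (∑ i, |v i|) - (∑ i, |u i|) - (∑ i, p i * (v i - u i)) = 0) :
    ∀ i, |v i| = p i * v i := by
  have key : (∑ i, (|v i| - p i * v i)) = 0 := by
    have : (∑ i, (|v i| - p i * v i))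
        = (∑ i, |v i|) - (∑ i, |u i|) - (∑ i, p i * (v i - u i)) := by
      rw [Finset.sum_sub_distrib]
      have : (∑ i, p i * (v i - u i)) = (∑ i, p i * v i) - ∑ i, p i * u i := by
        rw [← Finset.sum_sub_distrib]; congr 1; ext i; ring
      rw [this]
      have : (∑ i, p i * u i) = ∑ i, |u i| := by
        congr 1; ext i; exact (h i).2
      rw [this]; ring
    rw [this, hz]
  have hnn : ∀ i ∈ Finset.univ, (0:ℝ) ≤ |v i| - p i * v i := by
    intro i _
    have : p i * v i ≤ |v i| := by
      calc p i * v i ≤ |p i * v i| := le_abs_self _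
      _ = |p i| * |v i| := abs_mul _ _
      _ ≤ 1 * |v i| := mul_le_mul_of_nonneg_right (h i).1 (abs_nonneg _)
      _ = |v i| := one_mul _
    linarith
  intro i
  have := (Finset.sum_eq_zero_iff_of_nonneg hnn).mp key i (Finset.mem_univ i)
  linarith

/-- Canonical subgradient data with free value `c` on zero coordinates. -/
lemma l1_canonical_coord {n : ℕ} (u : Fin n → ℝ) (c : ℝ) (hc : |c| ≤ 1) :
    ∀ i, |(fun j => if u j = 0 then c else Real.sign (u j)) i| ≤ 1 ∧
      (fun j => if u j = 0 then c else Real.sign (u j)) i * u i = |u i| := by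
  intro i
  by_cases h : u i = 0
  · simp [h, hc]
  · simp only [h, if_false]
    rcases lt_trichotomy (u i) 0 with hlt | heq | hgt
    · rw [Real.sign_of_neg hlt]
      constructor
      · norm_num
      · rw [abs_of_neg hlt]; ring
    · exact absurd heq h
    · rw [Real.sign_of_pos hgt]
      constructor
      · norm_num
      · rw [abs_of_pos hgt]; ring

/-- For `J = ‖·‖₁` on `ℝⁿ`: `sign₀(u) = sign₀(v)` componentwise iff
`D_J^p(v,u) = 0` for all `p ∈ ∂J(u)` and `D_J^q(u,v) = 0` for all
`q ∈ ∂J(v)`. -/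
theorem l1_same_sign_iff_bregman_zero_both
    {n : ℕ} (u v : Fin n → ℝ) :
    (∀ i, Real.sign (u i) = Real.sign (v i)) ↔
      ((∀ p : Fin n → ℝ,
        (∀ w : Fin n → ℝ, (∑ i, |u i|) + ∑ i, p i * (w i - u i) ≤ ∑ i, |w i|) →
        (∑ i, |v i|) - (∑ i, |u i|) - (∑ i, p i * (v i - u i)) = 0) ∧
      (∀ q : Fin n → ℝ,
        (∀ w : Fin n → ℝ, (∑ i, |v i|) + ∑ i, q i * (w i - v i) ≤ ∑ i, |w i|) →
        (∑ i, |u i|) - (∑ i, |v i|) - (∑ i, q i * (u i - v i)) = 0)) := by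
  constructor
  · intro hsign
    have main : ∀ (a b : Fin n → ℝ), (∀ i, Real.sign (a i) = Real.sign (b i)) →
        ∀ p : Fin n → ℝ,
        (∀ w : Fin n → ℝ, (∑ i, |a i|) + ∑ i, p i * (w i - a i) ≤ ∑ i, |w i|) →
        (∑ i, |b i|) - (∑ i, |a i|) - (∑ i, p i * (b i - a i)) = 0 := by
      intro a b hs p hp
      have hcoord : ∀ i, |p i| ≤ 1 ∧ p i * a i = |a i| := by
        intro i
        exact abs_subgrad_facts (a i) (p i) (l1_coord_of_sub a p hp i)
      have hterm : ∀ i ∈ Finset.univ, |b i| - |a i| - p i * (b i - a i) = 0 := by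
        intro i _
        obtain ⟨h1, h2⟩ := hcoord i
        have hsi := hs i
        rcases lt_trichotomy (a i) 0 with hlt | heq | hgt
        · rw [Real.sign_of_neg hlt] at hsi
          have hbneg : b i < 0 := by
            rcases lt_trichotomy (b i) 0 with h' | h' | h'
            · exact h'
            · rw [h', Real.sign_zero] at hsi; norm_num at hsi
            · rw [Real.sign_of_pos h'] at hsi; norm_num at hsi
          have hpi : p i = -1 := by
            rw [abs_of_neg hlt] at h2; nlinarith
          rw [hpi, abs_of_neg hlt, abs_of_neg hbneg]; ring
        · have hbz : b i = 0 := by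
            rw [heq, Real.sign_zero] at hsi
            rcases lt_trichotomy (b i) 0 with h' | h' | h'
            · rw [Real.sign_of_neg h'] at hsi; norm_num at hsi
            · exact h'
            · rw [Real.sign_of_pos h'] at hsi; norm_num at hsi
          rw [heq, hbz]; simp
        · rw [Real.sign_of_pos hgt] at hsi
          have hbpos : 0 < b i := by
            rcases lt_trichotomy (b i) 0 with h' | h' | h'
            · rw [Real.sign_of_neg h'] at hsi; norm_num at hsi
            · rw [h', Real.sign_zero] at hsi; norm_num at hsi
            · exact h'
          have hpi : p i = 1 := by
            rw [abs_of_pos hgt] at h2; nlinarith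
          rw [hpi, abs_of_pos hgt, abs_of_pos hbpos]; ring
      have := Finset.sum_eq_zero hterm
      rw [Finset.sum_sub_distrib, Finset.sum_sub_distrib] at this
      linarith
    exact ⟨main u v hsign, main v u (fun i => (hsign i).symm)⟩
  · rintro ⟨hP, hQ⟩ i
    -- main extraction: for each c with |c| ≤ 1, get |v j| = p_c j * v j
    have getU : ∀ c : ℝ, |c| ≤ 1 → ∀ j, |v j| =
        (if u j = 0 then c else Real.sign (u j)) * v j := by
      intro c hc j
      have hco := l1_canonical_coord u c hc
      have hsub := l1_sub_of_coord u _ hco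
      exact l1_bregman_terms u v _ hco (hP _ hsub) j
    have getV : ∀ c : ℝ, |c| ≤ 1 → ∀ j, |u j| =
        (if v j = 0 then c else Real.sign (v j)) * u j := by
      intro c hc j
      have hco := l1_canonical_coord v c hc
      have hsub := l1_sub_of_coord v _ hco
      exact l1_bregman_terms v u _ hco (hQ _ hsub) j
    rcases lt_trichotomy (u i) 0 with hlt | heq | hgt
    · -- u i < 0, want v i < 0
      have h1 := getU 1 (by norm_num) i
      have hne : u i ≠ 0 := ne_of_lt hlt
      rw [if_neg hne, Real.sign_of_neg hlt] at h1
      -- |v i| = - v i, so v i ≤ 0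
      have hvle : v i ≤ 0 := by
        rcases le_or_gt (v i) 0 with h | h
        · exact h
        · rw [abs_of_pos h] at h1; linarith
      rcases eq_or_lt_of_le hvle with hveq | hvlt
      · -- v i = 0: contradiction using getV with c = 1
        have h2 := getV 1 (by norm_num) i
        rw [if_pos hveq] at h2
        rw [abs_of_neg hlt] at h2
        linarith
      · rw [Real.sign_of_neg hlt, Real.sign_of_neg hvlt]
    · -- u i = 0: show v i = 0
      have h1 := getU 1 (by norm_num) i
      have h2 := getU (-1) (by norm_num) i
      rw [if_pos heq] at h1 h2
      have : v i = 0 := by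
        rcases lt_trichotomy (v i) 0 with h | h | h
        · rw [abs_of_neg h] at h1; linarith
        · exact h
        · rw [abs_of_pos h] at h2; linarith
      rw [heq, this]
    · -- u i > 0, want v i > 0
      have h1 := getU 1 (by norm_num) i
      have hne : u i ≠ 0 := ne_of_gt hgt
      rw [if_neg hne, Real.sign_of_pos hgt] at h1
      have hvge : 0 ≤ v i := by
        rcases le_or_gt 0 (v i) with h | h
        · exact h
        · rw [abs_of_neg h] at h1; linarith
      rcases eq_or_lt_of_le hvge with hveq | hvlt
      · have h2 := getV (-1) (by norm_num) i
        rw [if_pos hveq.symm] at h2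
        rw [abs_of_pos hgt] at h2
        linarith
      · rw [Real.sign_of_pos hgt, Real.sign_of_pos hvlt]
end

section
/- Let J = ‖·‖₁ on ℝⁿ, u ∈ ℝⁿ and p ∈ ∂J(u). Then the infimal convolution of the Bregman distances satisfies (D_J^p(·,u) □ D_J^{-p}(·,-u))(v) = Σᵢ |vᵢ|(1 - |pᵢ|) for all v ∈ ℝⁿ. -/
open Finset

/-- For `J = ‖·‖₁` on `ℝⁿ` and `p ∈ ∂J(u)`, the infimal convolution of the
Bregman distances `D_J^p(·,u)` and `D_J^{-p}(·,-u)` evaluated at `v` equals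
`Σᵢ |vᵢ|(1 - |pᵢ|)`. -/
theorem l1_infconv_bregman_formula
    {n : ℕ} (u p : Fin n → ℝ)
    (hp : ∀ w : Fin n → ℝ, (∑ i, |u i|) + ∑ i, p i * (w i - u i) ≤ ∑ i, |w i|)
    (v : Fin n → ℝ) :
    (⨅ φ : Fin n → ℝ,
      ((∑ i, |φ i|) - ∑ i, p i * φ i) +
      ((∑ i, |v i - φ i|) + ∑ i, p i * (v i - φ i))) =
    ∑ i, |v i| * (1 - |p i|) := by
  -- |p i| ≤ 1
  have hp1 : ∀ i, |p i| ≤ 1 := by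
    intro i
    have key : ∀ c : ℝ, p i * c ≤ |u i + c| - |u i| := by
      intro c
      have h := hp (Function.update u i (u i + c))
      have h1 : ∑ j, p j * (Function.update u i (u i + c) j - u j) = p i * c := by
        rw [Finset.sum_eq_single i]
        · simp
        · intro j _ hj; simp [Function.update_of_ne hj]
        · simp
      have h2 : ∑ j, |Function.update u i (u i + c) j| =
          (∑ j, |u j|) - |u i| + |u i + c| := by
        have := Finset.add_sum_erase Finset.univ (fun j => |Function.update u i (u i + c) j|) (Finset.mem_univ i)
        have h3 : ∑ j ∈ Finset.univ.erase i, |Function.update u i (u i + c) j| =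
            ∑ j ∈ Finset.univ.erase i, |u j| := by
          apply Finset.sum_congr rfl
          intro j hj
          rw [Function.update_of_ne (Finset.ne_of_mem_erase hj)]
        have h4 := Finset.add_sum_erase Finset.univ (fun j => |u j|) (Finset.mem_univ i)
        simp only [Function.update_self] at this
        rw [← this, h3, ← h4]; ring
      rw [h1, h2] at h
      linarith
    have a := key 1
    have b := key (-1)
    have := abs_nonneg (u i)
    have c1 : |u i + 1| - |u i| ≤ 1 := by
      have := abs_sub_abs_le_abs_sub (u i + 1) (u i)
      have h1 : |u i + 1 - u i| = 1 := by norm_num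
      linarith
    have c2 : |u i + -1| - |u i| ≤ 1 := by
      have := abs_sub_abs_le_abs_sub (u i + -1) (u i)
      have h1 : |u i + -1 - u i| = 1 := by norm_num
      linarith
    rw [abs_le]
    constructor <;> nlinarith
  set T : ℝ := ∑ i, |v i| * (1 - |p i|) with hT
  have hsum : ∀ φ : Fin n → ℝ,
      ((∑ i, |φ i|) - ∑ i, p i * φ i) +
      ((∑ i, |v i - φ i|) + ∑ i, p i * (v i - φ i)) =
      ∑ i, (|φ i| - p i * φ i + (|v i - φ i| + p i * (v i - φ i))) := by
    intro φ
    rw [← Finset.sum_sub_distrib, ← Finset.sum_add_distrib, ← Finset.sum_add_distrib]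
  have hlow : ∀ φ : Fin n → ℝ, T ≤
      ((∑ i, |φ i|) - ∑ i, p i * φ i) +
      ((∑ i, |v i - φ i|) + ∑ i, p i * (v i - φ i)) := by
    intro φ
    rw [hsum, hT]
    apply Finset.sum_le_sum
    intro i _
    have h1 : p i * φ i ≤ |p i| * |φ i| := by
      rw [← abs_mul]; exact le_abs_self _
    have h2 : -(p i * (v i - φ i)) ≤ |p i| * |v i - φ i| := by
      rw [← abs_mul]; exact neg_le_abs _
    have h4 : |v i| ≤ |φ i| + |v i - φ i| := by
      have := abs_add_le (φ i) (v i - φ i)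
      simpa using this
    have h5 := hp1 i
    have h6 := abs_nonneg (φ i)
    have h7 := abs_nonneg (v i - φ i)
    nlinarith
  have hbdd : BddBelow (Set.range fun φ : Fin n → ℝ =>
      ((∑ i, |φ i|) - ∑ i, p i * φ i) +
      ((∑ i, |v i - φ i|) + ∑ i, p i * (v i - φ i))) := by
    exact ⟨T, by rintro x ⟨φ, rfl⟩; exact hlow φ⟩
  apply le_antisymm
  · set φ₀ : Fin n → ℝ := fun i => if 0 ≤ p i * v i then v i else 0 with hφ₀
    have heq : ((∑ i, |φ₀ i|) - ∑ i, p i * φ₀ i) +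
        ((∑ i, |v i - φ₀ i|) + ∑ i, p i * (v i - φ₀ i)) = T := by
      rw [hsum, hT]
      apply Finset.sum_congr rfl
      intro i _
      by_cases h : 0 ≤ p i * v i
      · have hpv : p i * v i = |p i| * |v i| := by
          rw [← abs_mul, abs_of_nonneg h]
        simp only [hφ₀, if_pos h]
        rw [sub_self, abs_zero, mul_zero]
        nlinarith
      · have hpv : p i * v i = -(|p i| * |v i|) := by
          rw [← abs_mul, abs_of_neg (lt_of_not_ge h)]; ring
        simp only [hφ₀, if_neg h]
        simp only [sub_zero, abs_zero, mul_zero]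
        nlinarith
    calc (⨅ φ : Fin n → ℝ,
      ((∑ i, |φ i|) - ∑ i, p i * φ i) +
      ((∑ i, |v i - φ i|) + ∑ i, p i * (v i - φ i))) ≤ _ := ciInf_le hbdd φ₀
      _ = T := heq
  · exact le_ciInf hlow
end

section
/- Let J = ‖·‖₁ on ℝⁿ and u, v ∈ ℝⁿ. If for every p ∈ ∂J(u) the infimal convolution (D_J^p(·,u) □ D_J^{-p}(·,-u))(v) = 0, then the support of v is contained in the support of u. Moreover u and v have equal support if and only if additionally (D_J^q(·,v) □ D_J^{-q}(·,-v))(u) = 0 for every q ∈ ∂J(v). -/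
open Finset

/-- The subdifferential of `‖·‖₁` on `ℝⁿ` at `u`. -/
def l1Subdiff {n : ℕ} (u p : Fin n → ℝ) : Prop :=
  ∀ w : Fin n → ℝ, (∑ i, |u i|) + ∑ i, p i * (w i - u i) ≤ ∑ i, |w i|

/-- The infimal convolution `(D_J^p(·,u) □ D_J^{-p}(·,-u))(v)` for `J = ‖·‖₁`,
using the one-homogeneous form `D_J^p(w,u) = J(w) - ⟨p,w⟩`. -/
noncomputable def l1InfConvBregman {n : ℕ} (p v : Fin n → ℝ) : ℝ :=
  ⨅ φ : Fin n → ℝ,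
    ((∑ i, |φ i|) - ∑ i, p i * φ i) +
    ((∑ i, |v i - φ i|) + ∑ i, p i * (v i - φ i))

/-! ### Auxiliary lemmas -/

private noncomputable def mysgn (t : ℝ) : ℝ := if t < 0 then -1 else if 0 < t then 1 else 0

private lemma mysgn_abs_le (t : ℝ) : |mysgn t| ≤ 1 := by
  unfold mysgn; split_ifs <;> simp

private lemma mysgn_mul (t : ℝ) : mysgn t * t = |t| := by
  unfold mysgn
  rcases lt_trichotomy t 0 with h | h | h
  · simp [h, abs_of_neg h, not_lt.mpr h.le]
  · simp [h]
  · simp [h, abs_of_pos h, not_lt.mpr h.le]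

private lemma sum_abs_update {n : ℕ} (u : Fin n → ℝ) (i : Fin n) (a : ℝ) :
    ∑ j, |Function.update u i a j| = (∑ j, |u j|) - |u i| + |a| := by
  have h : ∀ j : Fin n, |Function.update u i a j| - |u j|
      = if j = i then |a| - |u i| else 0 := by
    intro j
    rcases eq_or_ne j i with rfl | hj
    · simp [Function.update_apply]
    · simp [Function.update_apply, hj]
  have h2 : ∑ j, (|Function.update u i a j| - |u j|) = |a| - |u i| := by
    simp only [h]
    simp
  rw [Finset.sum_sub_distrib] at h2
  linarith

private lemma sum_mul_update_sub {n : ℕ} (p u : Fin n → ℝ) (i : Fin n) (a : ℝ) :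
    ∑ j, p j * (Function.update u i a j - u j) = p i * (a - u i) := by
  rw [Finset.sum_eq_single i]
  · simp
  · intro j _ hj; simp [Function.update_apply, hj]
  · simp

/-- Coordinatewise characterization gives subgradient. -/
private lemma subdiff_of_coords {n : ℕ} {u p : Fin n → ℝ}
    (h1 : ∀ i, |p i| ≤ 1) (h2 : ∀ i, p i * u i = |u i|) : l1Subdiff u p := by
  intro w
  rw [← Finset.sum_add_distrib]
  apply Finset.sum_le_sum
  intro i _
  have e := h2 i
  have hle := h1 i
  have habs : |p i * w i| = |p i| * |w i| := abs_mul _ _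
  nlinarith [le_abs_self (p i * w i), abs_nonneg (w i)]

private lemma subdiff_abs_le {n : ℕ} {u p : Fin n → ℝ} (h : l1Subdiff u p)
    (i : Fin n) : |p i| ≤ 1 := by
  have H : ∀ a : ℝ, p i * (a - u i) ≤ |a| - |u i| := by
    intro a
    have := h (Function.update u i a)
    rw [sum_abs_update, sum_mul_update_sub] at this
    linarith
  have h1 := H (u i + 1)
  have h2 := H (u i - 1)
  have a1 : |u i + 1| - |u i| ≤ 1 := by
    have := abs_sub_abs_le_abs_sub (u i + 1) (u i); simp at this; linarith
  have a2 : |u i - 1| - |u i| ≤ 1 := by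
    have := abs_sub_abs_le_abs_sub (u i - 1) (u i); simp at this; linarith
  rw [abs_le]
  constructor <;> nlinarith

private lemma subdiff_mul_eq {n : ℕ} {u p : Fin n → ℝ} (h : l1Subdiff u p)
    (i : Fin n) : p i * u i = |u i| := by
  have H := h (Function.update u i 0)
  rw [sum_abs_update, sum_mul_update_sub] at H
  have hle := subdiff_abs_le h i
  have habs : |p i * u i| = |p i| * |u i| := abs_mul _ _
  have h1 : |u i| ≤ p i * u i := by simp at H; linarith
  nlinarith [le_abs_self (p i * u i), abs_nonneg (u i)]

private lemma subdiff_abs_eq_one {n : ℕ} {u p : Fin n → ℝ} (h : l1Subdiff u p)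
    {i : Fin n} (hi : u i ≠ 0) : |p i| = 1 := by
  have e := subdiff_mul_eq h i
  have hle := subdiff_abs_le h i
  have habs : |p i * u i| = |p i| * |u i| := abs_mul _ _
  have hpos : 0 < |u i| := abs_pos.mpr hi
  nlinarith [le_abs_self (p i * u i)]

/-- The integrand rewritten as a single sum. -/
private lemma infconv_integrand {n : ℕ} (p v φ : Fin n → ℝ) :
    ((∑ i, |φ i|) - ∑ i, p i * φ i) +
    ((∑ i, |v i - φ i|) + ∑ i, p i * (v i - φ i)) =
    ∑ i, ((|φ i| - p i * φ i) + (|v i - φ i| + p i * (v i - φ i))) := by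
  rw [Finset.sum_add_distrib, Finset.sum_add_distrib, Finset.sum_sub_distrib]

private lemma term_nonneg {n : ℕ} {p : Fin n → ℝ} (hp : ∀ j, |p j| ≤ 1)
    (v φ : Fin n → ℝ) (j : Fin n) :
    0 ≤ (|φ j| - p j * φ j) + (|v j - φ j| + p j * (v j - φ j)) := by
  have h1 : p j * φ j ≤ |φ j| := by
    nlinarith [le_abs_self (p j * φ j), abs_mul (p j) (φ j), abs_nonneg (φ j), hp j]
  have h2 : -(|v j - φ j|) ≤ p j * (v j - φ j) := by
    nlinarith [neg_abs_le (p j * (v j - φ j)), abs_mul (p j) (v j - φ j),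
      abs_nonneg (v j - φ j), hp j]
  linarith

/-- Lower bound for the infimal convolution at one coordinate. -/
private lemma infconv_lower {n : ℕ} {p : Fin n → ℝ} (hp : ∀ j, |p j| ≤ 1)
    (v : Fin n → ℝ) (i : Fin n) :
    (1 - |p i|) * |v i| ≤ l1InfConvBregman p v := by
  apply le_ciInf
  intro φ
  rw [infconv_integrand]
  have key : (1 - |p i|) * |v i| ≤
      (|φ i| - p i * φ i) + (|v i - φ i| + p i * (v i - φ i)) := by
    have habs : |v i| ≤ |φ i| + |v i - φ i| := by
      have := abs_add_le (φ i) (v i - φ i); simp at this; linarith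
    have h1 : p i * φ i ≤ |p i| * |φ i| := by
      nlinarith [le_abs_self (p i * φ i), abs_mul (p i) (φ i)]
    have h2 : -(|p i| * |v i - φ i|) ≤ p i * (v i - φ i) := by
      nlinarith [neg_abs_le (p i * (v i - φ i)), abs_mul (p i) (v i - φ i)]
    nlinarith [abs_nonneg (φ i), abs_nonneg (v i - φ i), hp i, abs_nonneg (v i)]
  calc (1 - |p i|) * |v i| ≤ _ := key
    _ ≤ _ := Finset.single_le_sum (fun j _ => term_nonneg hp v φ j) (Finset.mem_univ i)

private lemma infconv_nonneg {n : ℕ} {p : Fin n → ℝ} (hp : ∀ j, |p j| ≤ 1)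
    (v : Fin n → ℝ) : 0 ≤ l1InfConvBregman p v := by
  apply le_ciInf
  intro φ
  rw [infconv_integrand]
  exact Finset.sum_nonneg fun j _ => term_nonneg hp v φ j

/-- If `|p j| = 1` on the support of `v`, the infimal convolution vanishes. -/
private lemma infconv_eq_zero {n : ℕ} {p v : Fin n → ℝ} (hp : ∀ j, |p j| ≤ 1)
    (h1 : ∀ j, v j ≠ 0 → |p j| = 1) : l1InfConvBregman p v = 0 := by
  refine le_antisymm ?_ (infconv_nonneg hp v)
  set φ₀ : Fin n → ℝ := fun j => if 0 ≤ p j * v j then v j else 0 with hφ₀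
  have hbdd : BddBelow (Set.range fun φ : Fin n → ℝ =>
      ((∑ i, |φ i|) - ∑ i, p i * φ i) +
      ((∑ i, |v i - φ i|) + ∑ i, p i * (v i - φ i))) := by
    refine ⟨0, ?_⟩
    rintro x ⟨φ, rfl⟩
    dsimp only
    rw [infconv_integrand]
    exact Finset.sum_nonneg fun j _ => term_nonneg hp v φ j
  have hval : ((∑ i, |φ₀ i|) - ∑ i, p i * φ₀ i) +
      ((∑ i, |v i - φ₀ i|) + ∑ i, p i * (v i - φ₀ i)) = 0 := by
    rw [infconv_integrand]
    apply Finset.sum_eq_zero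
    intro j _
    rcases eq_or_ne (v j) 0 with hv | hv
    · simp [hφ₀, hv]
    · have hone := h1 j hv
      have habs : |p j * v j| = |p j| * |v j| := abs_mul _ _
      by_cases hc : 0 ≤ p j * v j
      · have : p j * v j = |v j| := by
          rw [← abs_of_nonneg hc, habs, hone, one_mul]
        simp only [hφ₀, if_pos hc]
        simp only [sub_self, abs_zero, mul_zero, add_zero]
        linarith
      · have hneg : p j * v j = -|v j| := by
          push_neg at hc
          rw [← neg_neg (p j * v j), ← abs_of_neg hc, habs, hone, one_mul]
        simp only [hφ₀, if_neg hc]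
        simp
        linarith
  calc l1InfConvBregman p v ≤ _ := ciInf_le hbdd φ₀
    _ = 0 := hval

/-- Main direction: vanishing infimal convolution forces support inclusion. -/
private lemma support_subset {n : ℕ} {u v : Fin n → ℝ}
    (h : ∀ p : Fin n → ℝ, l1Subdiff u p → l1InfConvBregman p v = 0) :
    ∀ i, v i ≠ 0 → u i ≠ 0 := by
  intro i hvi hui
  set p : Fin n → ℝ := fun j => mysgn (u j) with hp
  have hsub : l1Subdiff u p :=
    subdiff_of_coords (fun j => mysgn_abs_le _) (fun j => mysgn_mul _)
  have hz := h p hsub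
  have hlow := infconv_lower (p := p) (fun j => mysgn_abs_le _) v i
  rw [hz] at hlow
  have hpi : p i = 0 := by simp [hp, hui, mysgn]
  rw [hpi] at hlow
  simp at hlow
  exact hvi hlow

/-- Converse: equal support gives vanishing infimal convolution. -/
private lemma infconv_zero_of_subset {n : ℕ} {u v : Fin n → ℝ}
    (hs : ∀ i, v i ≠ 0 → u i ≠ 0) :
    ∀ p : Fin n → ℝ, l1Subdiff u p → l1InfConvBregman p v = 0 := by
  intro p hp
  exact infconv_eq_zero (fun j => subdiff_abs_le hp j)
    (fun j hvj => subdiff_abs_eq_one hp (hs j hvj))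

/-- For `J = ‖·‖₁`: if the infimal convolution of Bregman distances
`(D_J^p(·,u) □ D_J^{-p}(·,-u))(v)` vanishes for every `p ∈ ∂J(u)`, then
`supp v ⊆ supp u`; moreover `u` and `v` have equal support iff additionally
`(D_J^q(·,v) □ D_J^{-q}(·,-v))(u) = 0` for every `q ∈ ∂J(v)`. -/
theorem l1_infconv_bregman_support
    {n : ℕ} (u v : Fin n → ℝ) :
    ((∀ p : Fin n → ℝ, l1Subdiff u p → l1InfConvBregman p v = 0) →
      ∀ i, v i ≠ 0 → u i ≠ 0) ∧
    ((∀ i, u i ≠ 0 ↔ v i ≠ 0) ↔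
      ((∀ p : Fin n → ℝ, l1Subdiff u p → l1InfConvBregman p v = 0) ∧
       (∀ q : Fin n → ℝ, l1Subdiff v q → l1InfConvBregman q u = 0))) := by
  refine ⟨support_subset, ?_, ?_⟩
  · intro hiff
    exact ⟨infconv_zero_of_subset (fun i hvi => (hiff i).mpr hvi),
      infconv_zero_of_subset (fun i hui => (hiff i).mp hui)⟩
  · rintro ⟨h1, h2⟩ i
    exact ⟨support_subset h2 i, support_subset h1 i⟩
end

section
/- Let H be a real Hilbert space, K : H → H bounded linear, W a bounded self-adjoint operator with ‖W‖ ≤ 1, and let sequences (uᵏ), (qᵏ), (pᵏ = K*qᵏ) satisfy qᵏ⁺¹ = Wqᵏ + f - Kuᵏ⁺¹ with pᵏ ∈ ∂J(uᵏ) for a convex J. Then ‖qᵏ⁺¹ - qᵏ‖² + 2⟨pᵏ⁺¹ - pᵏ, uᵏ⁺¹ - uᵏ⟩ + ‖K(uᵏ⁺¹ - uᵏ)‖² = ‖W(qᵏ - qᵏ⁻¹)‖², and consequently ‖qᵏ⁺¹ - qᵏ‖ is monotonically decreasing in k. -/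
open RealInnerProductSpace

/-- Dissipation identity for the color Bregman iteration
`qᵏ⁺¹ = Wqᵏ + f - Kuᵏ⁺¹` with `pᵏ = K*qᵏ ∈ ∂J(uᵏ)`:
`‖qᵏ⁺¹-qᵏ‖² + 2⟨pᵏ⁺¹-pᵏ, uᵏ⁺¹-uᵏ⟩ + ‖K(uᵏ⁺¹-uᵏ)‖² = ‖W(qᵏ-qᵏ⁻¹)‖²`,
hence `‖qᵏ⁺¹-qᵏ‖` is monotonically decreasing. -/
theorem color_bregman_dissipation_identity
    {H : Type*} [NormedAddCommGroup H] [InnerProductSpace ℝ H] [CompleteSpace H]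
    (K W : H →L[ℝ] H) (hW : IsSelfAdjoint W) (hWnorm : ‖W‖ ≤ 1)
    (J : H → ℝ) (hJ : ConvexOn ℝ Set.univ J)
    (u q : ℕ → H) (f : H)
    (hsub : ∀ k, ∀ w, J (u k) + ⟪K.adjoint (q k), w - u k⟫ ≤ J w)
    (iter : ∀ k, q (k + 1) = W (q k) + f - K (u (k + 1))) :
    ∀ k : ℕ,
      (‖q (k + 2) - q (k + 1)‖ ^ 2 +
        2 * ⟪K.adjoint (q (k + 2)) - K.adjoint (q (k + 1)),
              u (k + 2) - u (k + 1)⟫ +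
        ‖K (u (k + 2) - u (k + 1))‖ ^ 2 = ‖W (q (k + 1) - q k)‖ ^ 2) ∧
      ‖q (k + 2) - q (k + 1)‖ ≤ ‖q (k + 1) - q k‖ := by
  intro k
  set a := W (q (k + 1) - q k) with ha
  set b := K (u (k + 2) - u (k + 1)) with hb
  have hd : q (k + 2) - q (k + 1) = a - b := by
    have h1 := iter (k + 1)
    have h2 := iter k
    rw [ha, hb, map_sub, map_sub]
    rw [show k + 1 + 1 = k + 2 from rfl] at h1
    rw [h1, h2]
    abel
  -- inner product rewrite
  have hip : ⟪K.adjoint (q (k + 2)) - K.adjoint (q (k + 1)), u (k + 2) - u (k + 1)⟫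
      = ⟪a - b, b⟫ := by
    rw [← map_sub, ← hd, ContinuousLinearMap.adjoint_inner_left, ← hb]
  have hid : ‖q (k + 2) - q (k + 1)‖ ^ 2 +
        2 * ⟪K.adjoint (q (k + 2)) - K.adjoint (q (k + 1)), u (k + 2) - u (k + 1)⟫ +
        ‖K (u (k + 2) - u (k + 1))‖ ^ 2 = ‖W (q (k + 1) - q k)‖ ^ 2 := by
    rw [hip, hd, ← hb, ← ha]
    have hexp : ‖a - b‖ ^ 2 = ‖a‖ ^ 2 - 2 * ⟪a, b⟫ + ‖b‖ ^ 2 := by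
      rw [norm_sub_sq_real]
    rw [hexp, inner_sub_left, real_inner_self_eq_norm_sq]
    ring
  refine ⟨hid, ?_⟩
  -- Bregman nonnegativity
  have h1 := hsub (k + 1) (u (k + 2))
  have h2 := hsub (k + 2) (u (k + 1))
  have hbreg : 0 ≤ ⟪K.adjoint (q (k + 2)) - K.adjoint (q (k + 1)), u (k + 2) - u (k + 1)⟫ := by
    have h3 : ⟪K.adjoint (q (k + 2)), u (k + 1) - u (k + 2)⟫
        = -⟪K.adjoint (q (k + 2)), u (k + 2) - u (k + 1)⟫ := by
      rw [show u (k + 1) - u (k + 2) = -(u (k + 2) - u (k + 1)) by abel, inner_neg_right]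
    rw [inner_sub_left]
    rw [h3] at h2
    linarith
  have hW2 : ‖a‖ ≤ ‖q (k + 1) - q k‖ := by
    calc ‖a‖ ≤ ‖W‖ * ‖q (k + 1) - q k‖ := W.le_opNorm _
      _ ≤ 1 * ‖q (k + 1) - q k‖ := by
          exact mul_le_mul_of_nonneg_right hWnorm (norm_nonneg _)
      _ = ‖q (k + 1) - q k‖ := one_mul _
  have hsq : ‖q (k + 2) - q (k + 1)‖ ^ 2 ≤ ‖q (k + 1) - q k‖ ^ 2 := by
    have hb2 : (0:ℝ) ≤ ‖K (u (k + 2) - u (k + 1))‖ ^ 2 := sq_nonneg _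
    have : ‖W (q (k + 1) - q k)‖ ^ 2 ≤ ‖q (k + 1) - q k‖ ^ 2 := by
      have := hW2
      nlinarith [norm_nonneg a]
    nlinarith
  exact (pow_le_pow_iff_left₀ (norm_nonneg _) (norm_nonneg _) two_ne_zero).mp hsq
end

section
/- Suppose there exist ū, q̄ with 0 = (W-I)q̄ + f - Kū and K*q̄ᵢ ∈ ∂J(ūᵢ) (clean data case), and (uᵏ,qᵏ) is generated by qᵏ⁺¹ = Wqᵏ + f - Kuᵏ⁺¹, K*qᵏ⁺¹ ∈ ∂J(uᵏ⁺¹), with W self-adjoint, ‖W‖ ≤ 1. Then ‖qᵏ - q̄‖ is monotonically decreasing in k. -/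
open RealInnerProductSpace

/-- Clean data case: if `0 = (W-I)q̄ + f - Kū` with `K*q̄ ∈ ∂J(ū)`, and
`(uᵏ,qᵏ)` is generated by the color Bregman iteration with `W` self-adjoint
and `‖W‖ ≤ 1`, then `‖qᵏ - q̄‖` is monotonically decreasing. -/
theorem color_bregman_clean_data_monotone
    {H : Type*} [NormedAddCommGroup H] [InnerProductSpace ℝ H] [CompleteSpace H]
    (K W : H →L[ℝ] H) (hW : IsSelfAdjoint W) (hWnorm : ‖W‖ ≤ 1)
    (J : H → ℝ) (hJ : ConvexOn ℝ Set.univ J)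
    (u q : ℕ → H) (f ubar qbar : H)
    (clean : W qbar - qbar + f - K ubar = 0)
    (hsubbar : ∀ w, J ubar + ⟪K.adjoint qbar, w - ubar⟫ ≤ J w)
    (hsub : ∀ k, ∀ w, J (u k) + ⟪K.adjoint (q k), w - u k⟫ ≤ J w)
    (iter : ∀ k, q (k + 1) = W (q k) + f - K (u (k + 1))) :
    ∀ k, ‖q (k + 1) - qbar‖ ≤ ‖q k - qbar‖ := by
  intro k
  have hq : W qbar + f - K ubar = qbar := by
    have h : W qbar + f - K ubar - qbar = 0 := by
      calc W qbar + f - K ubar - qbar = W qbar - qbar + f - K ubar := by abel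
        _ = 0 := clean
    exact sub_eq_zero.mp h
  have hkey : q (k+1) - qbar = W (q k - qbar) - K (u (k+1) - ubar) := by
    rw [iter k, map_sub, map_sub]
    conv_lhs => rw [← hq]
    abel
  -- Bregman nonnegativity
  have h1 := hsub (k+1) ubar
  have h2 := hsubbar (u (k+1))
  have hb : 0 ≤ ⟪q (k+1) - qbar, K (u (k+1) - ubar)⟫ := by
    have h3 : ⟪K.adjoint (q (k+1)), ubar - u (k+1)⟫
        + ⟪K.adjoint qbar, u (k+1) - ubar⟫ ≤ 0 := by linarith
    have h4 : ⟪K.adjoint (q (k+1)) - K.adjoint qbar, u (k+1) - ubar⟫ ≥ 0 := by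
      rw [inner_sub_left]
      have : ⟪K.adjoint (q (k+1)), ubar - u (k+1)⟫
          = - ⟪K.adjoint (q (k+1)), u (k+1) - ubar⟫ := by
        rw [← inner_neg_right]; congr 1; abel
      linarith
    have h5 : K.adjoint (q (k+1)) - K.adjoint qbar = K.adjoint (q (k+1) - qbar) := by
      rw [map_sub]
    rw [h5, ContinuousLinearMap.adjoint_inner_left] at h4
    linarith
  set e := q k - qbar with he
  set e' := q (k+1) - qbar with he'
  have hsq : ‖e'‖^2 = ⟪e', W e⟫ - ⟪e', K (u (k+1) - ubar)⟫ := by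
    rw [← real_inner_self_eq_norm_sq]
    nth_rewrite 2 [hkey]
    rw [inner_sub_right]
  have hle1 : ⟪e', W e⟫ ≤ ‖e'‖ * ‖W e‖ := real_inner_le_norm _ _
  have hle2 : ‖W e‖ ≤ ‖e‖ := by
    calc ‖W e‖ ≤ ‖W‖ * ‖e‖ := W.le_opNorm e
      _ ≤ 1 * ‖e‖ := by gcongr
      _ = ‖e‖ := one_mul _
  have hfin : ‖e'‖^2 ≤ ‖e'‖ * ‖e‖ := by nlinarith [norm_nonneg e']
  nlinarith [norm_nonneg e', norm_nonneg e]
end
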